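/- In the noisy non-adaptive group testing model with the column statistic T(·) built with constant ψ ≥ 0, for every non-defective item j ∉ S_d the variance of T(j) is at most M·p·(Γ + ψ²·(1−Γ)), and for every defective item i ∈ S_d the variance of T(i) is at most M·p·(γ0·Γ + ψ²·(1−γ0·Γ)). -/

import Mathlib

open MeasureTheory ProbabilityTheory

structure GTModel (Ω : Type) [MeasureSpace Ω] (M N : ℕ) (p u q : ℝ) where
  X : Fin M → Fin N → Ω → Bool
  d : Fin N → Fin M → Ω → Bool
  w : Fin M → Ω → Bool
  measX : ∀ l i, Measurable (X l i)
  measd : ∀ i l, Measurable (d i l)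
  measw : ∀ l, Measurable (w l)
  indep : iIndepFun
      (fun t : (Fin M × Fin N) ⊕ ((Fin N × Fin M) ⊕ Fin M) =>
        Sum.elim (fun li => X li.1 li.2)
          (Sum.elim (fun il => d il.1 il.2) (fun l => w l)) t)
      (ℙ : Measure Ω)
  probX : ∀ l i, (ℙ : Measure Ω) {ω | X l i ω = true} = ENNReal.ofReal p
  probd : ∀ i l, (ℙ : Measure Ω) {ω | d i l ω = true} = ENNReal.ofReal (1 - u)
  probw : ∀ l, (ℙ : Measure Ω) {ω | w l ω = true} = ENNReal.ofReal q

noncomputable def GTModel.Y {Ω : Type} [MeasureSpace Ω] {M N : ℕ} {p u q : ℝ}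
    (G : GTModel Ω M N p u q) (Sd : Finset (Fin N)) (l : Fin M) (ω : Ω) : Bool :=
  (Sd.sup fun i => G.d i l ω && G.X l i ω) || G.w l ω
/-- Column statistic: `T(i) = Σ_l X_{li}(1−Y_l) − ψ Σ_l X_{li} Y_l`. -/
noncomputable def GTModel.T {Ω : Type} [MeasureSpace Ω] {M N : ℕ} {p u q : ℝ}
    (G : GTModel Ω M N p u q) (Sd : Finset (Fin N)) (ψ : ℝ) (i : Fin N) (ω : Ω) : ℝ :=
  (∑ l : Fin M, (if G.X l i ω then (1 : ℝ) else 0) * (if G.Y Sd l ω then 0 else 1))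
    - ψ * ∑ l : Fin M, (if G.X l i ω then (1 : ℝ) else 0) * (if G.Y Sd l ω then 1 else 0)

/-!
Each summand `X_{li}(1 - Y_l) - ψ X_{li} Y_l` of `T(i)` is a function of the random bits of test
`l` alone, so the summands are independent and `Var T(i)` is the sum of their variances. A summand
takes the value `1` on `{X_{li} = 1, Y_l = 0}`, `-ψ` on `{X_{li} = 1, Y_l = 1}` and `0` otherwise,
so its variance is at most `r + ψ² (p - r)` with `r = P(X_{li} = 1, Y_l = 0)`. The event
`{X_{li} = 1, Y_l = 0}` is the intersection of `{X_{li} = 1}`, `{w(l) = 0}`, `{d_i(l) = 0}` when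
`i ∈ S_d`, and `{d_j(l) X_{lj} = 0}` for the other defectives `j`; these depend on disjoint sets of
independent bits, giving `r = p (1 - q) (1 - (1 - u) p)^K` for `i ∉ S_d` and
`r = p u (1 - q) (1 - (1 - u) p)^(K - 1) = p γ₀ Γ` for `i ∈ S_d`.
-/

section DeterminedBy

variable {Ω ι β γ : Type*}

def DeterminedBy (f : ι → Ω → β) (S : Finset ι) (g : Ω → γ) : Prop :=
  ∀ ⦃ω ω'⦄, (∀ i ∈ S, f i ω = f i ω') → g ω = g ω'

variable {f : ι → Ω → β}

theorem DeterminedBy.comp {δ : Type*} {S : Finset ι} {g : Ω → γ} (hg : DeterminedBy f S g)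
    (φ : γ → δ) : DeterminedBy f S (φ ∘ g) :=
  fun _ _ h => congrArg φ (hg h)

theorem DeterminedBy.comp₂ {δ ε : Type*} {S : Finset ι} {g : Ω → γ} {h : Ω → δ}
    (hg : DeterminedBy f S g) (hh : DeterminedBy f S h) (φ : γ → δ → ε) :
    DeterminedBy f S fun ω => φ (g ω) (h ω) :=
  fun _ _ hω => congrArg₂ φ (hg hω) (hh hω)

theorem DeterminedBy.inter [DecidableEq ι] {S T : Finset ι} {A E : Set Ω}
    (hA : DeterminedBy f S (· ∈ A)) (hE : DeterminedBy f T (· ∈ E)) :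
    DeterminedBy f (S ∪ T) (· ∈ A ∩ E) := fun _ _ h => by
  simp only [Set.mem_inter_iff, hA fun i hi => h i (Finset.mem_union_left T hi),
    hE fun i hi => h i (Finset.mem_union_right S hi)]

theorem DeterminedBy.biInter [DecidableEq ι] {κ : Type*} {s : Finset κ} {B : κ → Finset ι}
    {A : κ → Set Ω} (hA : ∀ k ∈ s, DeterminedBy f (B k) (· ∈ A k)) :
    DeterminedBy f (s.biUnion B) (· ∈ ⋂ k ∈ s, A k) := fun _ _ h => by
  simp only [Set.mem_iInter]
  exact propext <| forall₂_congr fun k hk =>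
    Iff.of_eq (hA k hk fun i hi => h i (by simpa using ⟨k, hk, hi⟩))

theorem DeterminedBy.exists_eq_comp [Nonempty γ] {S : Finset ι} {g : Ω → γ}
    (hg : DeterminedBy f S g) : ∃ φ : (S → β) → γ, g = φ ∘ fun ω (i : S) => f i ω := by
  classical
  refine ⟨Function.extend (fun ω (i : S) => f i ω) g (fun _ => Classical.arbitrary γ),
    funext fun ω => ?_⟩
  exact (Function.FactorsThrough.extend_apply (f := fun ω (i : S) => f i ω)
    (fun ω ω' h => hg fun i hi => congrFun h ⟨i, hi⟩) _ ω).symm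

variable [MeasurableSpace Ω] [MeasurableSpace β] [Countable β] [MeasurableSingletonClass β]

theorem DeterminedBy.measurable [MeasurableSpace γ] [Nonempty γ] {S : Finset ι} {g : Ω → γ}
    (hf : ∀ i, Measurable (f i)) (hg : DeterminedBy f S g) : Measurable g := by
  obtain ⟨φ, rfl⟩ := hg.exists_eq_comp
  exact (measurable_of_countable φ).comp (measurable_pi_lambda _ fun i => hf i)

variable {μ : Measure Ω}

theorem ProbabilityTheory.iIndepFun.indepFun_of_determinedBy {δ : Type*} [MeasurableSpace γ]
    [MeasurableSpace δ] [Nonempty γ] [Nonempty δ] (hf : iIndepFun f μ)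
    (hmeas : ∀ i, Measurable (f i)) {S T : Finset ι} (hST : Disjoint S T) {g : Ω → γ} {h : Ω → δ}
    (hg : DeterminedBy f S g) (hh : DeterminedBy f T h) : IndepFun g h μ := by
  obtain ⟨φ, rfl⟩ := hg.exists_eq_comp
  obtain ⟨χ, rfl⟩ := hh.exists_eq_comp
  exact (hf.indepFun_finset S T hST hmeas).comp (measurable_of_countable φ)
    (measurable_of_countable χ)

theorem ProbabilityTheory.iIndepFun.measureReal_inter_of_determinedBy (hf : iIndepFun f μ)
    (hmeas : ∀ i, Measurable (f i)) {S T : Finset ι} (hST : Disjoint S T) {A E : Set Ω}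
    (hA : DeterminedBy f S (· ∈ A)) (hE : DeterminedBy f T (· ∈ E)) :
    μ.real (A ∩ E) = μ.real A * μ.real E := by
  have hmem {C : Set Ω} : MeasurableSet[MeasurableSpace.comap (· ∈ C) inferInstance] C :=
    ⟨{True}, trivial, by ext; simp⟩
  rw [measureReal_def, measureReal_def, measureReal_def,
    (hf.indepFun_of_determinedBy hmeas hST hA hE).meas_inter hmem hmem, ENNReal.toReal_mul]

theorem ProbabilityTheory.iIndepFun.measureReal_biInter_of_determinedBy [DecidableEq ι]
    {κ : Type*} (hf : iIndepFun f μ) (hmeas : ∀ i, Measurable (f i)) {s : Finset κ}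
    {B : κ → Finset ι} (hB : (s : Set κ).PairwiseDisjoint B) {A : κ → Set Ω}
    (hA : ∀ k ∈ s, DeterminedBy f (B k) (· ∈ A k)) :
    μ.real (⋂ k ∈ s, A k) = ∏ k ∈ s, μ.real (A k) := by
  classical
  induction s using Finset.induction_on with
  | empty =>
    have := hf.isProbabilityMeasure
    simp
  | insert a s ha ih =>
    have hs : ∀ k ∈ s, k ∈ insert a s := fun k hk => Finset.mem_insert_of_mem hk
    have hdisj : Disjoint (B a) (s.biUnion B) := by
      refine (Finset.disjoint_biUnion_right _ _ _).2 fun k hk => hB (by simp) (by simp [hk]) ?_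
      rintro rfl
      exact ha hk
    rw [Finset.set_biInter_insert, Finset.prod_insert ha,
      hf.measureReal_inter_of_determinedBy hmeas hdisj (hA a (by simp))
        (DeterminedBy.biInter fun k hk => hA k (hs k hk)),
      ih (hB.subset (by simp)) fun k hk => hA k (hs k hk)]

end DeterminedBy

section Score

def score (ψ : ℝ) (x y : Bool) : ℝ :=
  (if x then 1 else 0) * (if y then 0 else 1) - ψ * ((if x then 1 else 0) * (if y then 1 else 0))

variable {Ω : Type*} [MeasurableSpace Ω] {μ : Measure Ω} {x y : Ω → Bool}

theorem measurable_score (ψ : ℝ) (hx : Measurable x) (hy : Measurable y) :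
    Measurable fun ω => score ψ (x ω) (y ω) :=
  (measurable_of_countable (Function.uncurry (score ψ))).comp (hx.prodMk hy)

theorem abs_score_le (ψ : ℝ) (a b : Bool) : |score ψ a b| ≤ 1 + |ψ| := by
  cases a <;> cases b <;> simp [score] <;> linarith [abs_nonneg ψ]

theorem memLp_score [IsFiniteMeasure μ] (r : ENNReal) (ψ : ℝ) (hx : Measurable x)
    (hy : Measurable y) : MemLp (fun ω => score ψ (x ω) (y ω)) r μ :=
  MemLp.of_bound (measurable_score ψ hx hy).aestronglyMeasurable _
    (Filter.Eventually.of_forall fun ω => abs_score_le ψ (x ω) (y ω))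

theorem variance_score_le [IsProbabilityMeasure μ] (ψ : ℝ) (hx : Measurable x)
    (hy : Measurable y) :
    variance (fun ω => score ψ (x ω) (y ω)) μ ≤
      μ.real {ω | x ω = true ∧ y ω = false}
        + ψ ^ 2 * (μ.real {ω | x ω = true} - μ.real {ω | x ω = true ∧ y ω = false}) := by
  set A := {ω | x ω = true ∧ y ω = false}
  set B := {ω | x ω = true ∧ y ω = true}
  have hA : MeasurableSet A := (hx (measurableSet_singleton true)).inter
    (hy (measurableSet_singleton false))
  have hB : MeasurableSet B := (hx (measurableSet_singleton true)).inter
    (hy (measurableSet_singleton true))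
  have hAB : μ.real A + μ.real B = μ.real {ω | x ω = true} := by
    rw [← measureReal_union (Set.disjoint_left.2 fun ω h h' => by simp_all [A, B]) hB]
    congr 1
    ext ω
    simp only [A, B, Set.mem_union, Set.mem_ofPred_eq]
    cases y ω <;> simp
  have hsq : (fun ω => score ψ (x ω) (y ω)) ^ 2
      = A.indicator (fun _ => 1) + B.indicator (fun _ => ψ ^ 2) := by
    funext ω
    cases hxω : x ω <;> cases hyω : y ω <;> simp [score, A, B, hxω, hyω]
  calc variance (fun ω => score ψ (x ω) (y ω)) μ
      ≤ μ[(fun ω => score ψ (x ω) (y ω)) ^ 2] :=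
        variance_le_expectation_sq (measurable_score ψ hx hy).aestronglyMeasurable
    _ = μ.real A + ψ ^ 2 * μ.real B := by
        rw [hsq, Pi.add_def, integral_add ((integrable_const _).indicator hA)
          ((integrable_const _).indicator hB), integral_indicator_const _ hA,
          integral_indicator_const _ hB]
        simp [mul_comm]
    _ = _ := by rw [← hAB]; ring

end Score

namespace GTModel

variable {Ω : Type} [MeasureSpace Ω] {M N : ℕ} {p u q : ℝ} (G : GTModel Ω M N p u q)
  (Sd : Finset (Fin N))

abbrev Bit (M N : ℕ) := (Fin M × Fin N) ⊕ ((Fin N × Fin M) ⊕ Fin M)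

def bits : Bit M N → Ω → Bool :=
  Sum.elim (fun li => G.X li.1 li.2) (Sum.elim (fun il => G.d il.1 il.2) (fun l => G.w l))

theorem measurable_bits : ∀ t, Measurable (G.bits t)
  | .inl (l, i) => G.measX l i
  | .inr (.inl (i, l)) => G.measd i l
  | .inr (.inr l) => G.measw l

theorem iIndepFun_bits : iIndepFun G.bits ℙ := G.indep

theorem isProbabilityMeasure (G : GTModel Ω M N p u q) : IsProbabilityMeasure (ℙ : Measure Ω) :=
  iIndepFun.isProbabilityMeasure G.indep

section Determined

variable {S : Finset (Bit M N)} {l : Fin M} {i : Fin N}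

theorem determinedBy_X (h : .inl (l, i) ∈ S) : DeterminedBy G.bits S (G.X l i) :=
  fun _ _ hω => hω _ h

theorem determinedBy_d (h : .inr (.inl (i, l)) ∈ S) : DeterminedBy G.bits S (G.d i l) :=
  fun _ _ hω => hω _ h

theorem determinedBy_w (h : .inr (.inr l) ∈ S) : DeterminedBy G.bits S (G.w l) :=
  fun _ _ hω => hω _ h

end Determined

def testOf : Bit M N → Fin M := Sum.elim Prod.fst (Sum.elim Prod.snd id)

def testBlock (l : Fin M) : Finset (Bit M N) := {t | testOf t = l}

theorem mem_testBlock {l : Fin M} {t : Bit M N} : t ∈ testBlock l ↔ testOf t = l := by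
  simp [testBlock]

theorem disjoint_testBlock {l l' : Fin M} (h : l ≠ l') :
    Disjoint (testBlock (N := N) l) (testBlock l') :=
  Finset.disjoint_filter.2 fun _ _ ht ht' => h (ht.symm.trans ht')

theorem determinedBy_Y (l : Fin M) : DeterminedBy G.bits (testBlock l) (G.Y Sd l) := by
  intro ω ω' h
  simp only [GTModel.Y, G.determinedBy_X (mem_testBlock.2 rfl) h,
    fun i => G.determinedBy_d (i := i) (mem_testBlock.2 rfl) h,
    G.determinedBy_w (mem_testBlock.2 rfl) h]

theorem measurable_Y (l : Fin M) : Measurable (G.Y Sd l) :=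
  (G.determinedBy_Y Sd l).measurable G.measurable_bits

theorem measureReal_X_true (hp : 0 ≤ p) (l : Fin M) (i : Fin N) :
    (ℙ : Measure Ω).real {ω | G.X l i ω = true} = p := by
  rw [measureReal_def, G.probX, ENNReal.toReal_ofReal hp]

theorem T_eq_sum_score (ψ : ℝ) (i : Fin N) :
    G.T Sd ψ i = ∑ l, fun ω => score ψ (G.X l i ω) (G.Y Sd l ω) := by
  funext ω
  simp only [GTModel.T, score, Finset.sum_apply, Finset.mul_sum, Finset.sum_sub_distrib]

theorem variance_T_le (hp : 0 ≤ p) (ψ : ℝ) (i : Fin N) {r : ℝ}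
    (hr : ∀ l, (ℙ : Measure Ω).real {ω | G.X l i ω = true ∧ G.Y Sd l ω = false} = r) :
    variance (G.T Sd ψ i) ℙ ≤ M * (r + ψ ^ 2 * (p - r)) := by
  have := G.isProbabilityMeasure
  rw [T_eq_sum_score, IndepFun.variance_sum
    (fun l _ => memLp_score 2 ψ (G.measX l i) (G.measurable_Y Sd l))
    (fun l _ l' _ hll' => G.iIndepFun_bits.indepFun_of_determinedBy G.measurable_bits
      (disjoint_testBlock hll')
      ((G.determinedBy_X (mem_testBlock.2 rfl)).comp₂ (G.determinedBy_Y Sd l) (score ψ))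
      ((G.determinedBy_X (mem_testBlock.2 rfl)).comp₂ (G.determinedBy_Y Sd l') (score ψ)))]
  calc ∑ l, variance (fun ω => score ψ (G.X l i ω) (G.Y Sd l ω)) ℙ
      ≤ ∑ _l : Fin M, (r + ψ ^ 2 * (p - r)) := Finset.sum_le_sum fun l _ => by
        simpa only [hr l, G.measureReal_X_true hp] using
          variance_score_le (μ := ℙ) ψ (G.measX l i) (G.measurable_Y Sd l)
    _ = M * (r + ψ ^ 2 * (p - r)) := by simp [mul_add]

theorem measureReal_d_true (hu : u ≤ 1) (i : Fin N) (l : Fin M) :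
    (ℙ : Measure Ω).real {ω | G.d i l ω = true} = 1 - u := by
  rw [measureReal_def, G.probd, ENNReal.toReal_ofReal (by linarith)]

theorem measureReal_d_false (hu : u ≤ 1) (i : Fin N) (l : Fin M) :
    (ℙ : Measure Ω).real {ω | G.d i l ω = false} = u := by
  have := G.isProbabilityMeasure
  have hc : {ω | G.d i l ω = false} = {ω | G.d i l ω = true}ᶜ := by ext; simp
  rw [hc, probReal_compl_eq_one_sub (s := {ω | G.d i l ω = true})
    (G.measd i l (measurableSet_singleton true)), G.measureReal_d_true hu]
  ring

theorem measureReal_w_false (hq : 0 ≤ q) (l : Fin M) :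
    (ℙ : Measure Ω).real {ω | G.w l ω = false} = 1 - q := by
  have := G.isProbabilityMeasure
  have hc : {ω | G.w l ω = false} = {ω | G.w l ω = true}ᶜ := by ext; simp
  rw [hc, probReal_compl_eq_one_sub (s := {ω | G.w l ω = true})
    (G.measw l (measurableSet_singleton true)), measureReal_def, G.probw,
    ENNReal.toReal_ofReal hq]

theorem measureReal_d_and_X_false (hp : 0 ≤ p) (hu : u ≤ 1) (l : Fin M) (i : Fin N) :
    (ℙ : Measure Ω).real {ω | (G.d i l ω && G.X l i ω) = false} = 1 - (1 - u) * p := by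
  have := G.isProbabilityMeasure
  have hc : {ω | (G.d i l ω && G.X l i ω) = false}
      = ({ω | G.d i l ω = true} ∩ {ω | G.X l i ω = true})ᶜ := by ext; simp
  have hd : DeterminedBy G.bits {.inr (.inl (i, l))} (· ∈ {ω | G.d i l ω = true}) :=
    (G.determinedBy_d (Finset.mem_singleton_self _)).comp (· = true)
  have hX : DeterminedBy G.bits {.inl (l, i)} (· ∈ {ω | G.X l i ω = true}) :=
    (G.determinedBy_X (Finset.mem_singleton_self _)).comp (· = true)
  rw [hc, probReal_compl_eq_one_sub
      (s := {ω | G.d i l ω = true} ∩ {ω | G.X l i ω = true})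
      ((G.measd i l (measurableSet_singleton true)).inter
        (G.measX l i (measurableSet_singleton true))),
    G.iIndepFun_bits.measureReal_inter_of_determinedBy G.measurable_bits (by simp) hd hX,
    G.measureReal_d_true hu, G.measureReal_X_true hp]

theorem Y_eq_false_iff (l : Fin M) (ω : Ω) :
    G.Y Sd l ω = false ↔ (∀ i ∈ Sd, (G.d i l ω && G.X l i ω) = false) ∧ G.w l ω = false := by
  rw [GTModel.Y, Bool.or_eq_false_iff]
  exact and_congr_left' (Finset.sup_eq_bot_iff _ _)

def maskBlock (l : Fin M) (j : Fin N) : Finset (Bit M N) := {.inl (l, j), .inr (.inl (j, l))}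

theorem setOf_X_and_Y_false (l : Fin M) (i : Fin N) :
    {ω | G.X l i ω = true ∧ G.Y Sd l ω = false} =
      {ω | G.X l i ω = true} ∩ ({ω | i ∈ Sd → G.d i l ω = false} ∩ ({ω | G.w l ω = false} ∩
        ⋂ j ∈ Sd.erase i, {ω | (G.d j l ω && G.X l j ω) = false})) := by
  ext ω
  simp only [Set.mem_ofPred_eq, Set.mem_inter_iff, Set.mem_iInter, Finset.mem_erase,
    Y_eq_false_iff]
  constructor
  · rintro ⟨hX, hmask, hw⟩
    exact ⟨hX, fun hi => by simpa [hX] using hmask i hi, hw, fun j hj => hmask j hj.2⟩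
  · rintro ⟨hX, hd, hw, hmask⟩
    refine ⟨hX, fun j hj => ?_, hw⟩
    by_cases hji : j = i
    · subst hji
      simp [hd hj]
    · exact hmask j ⟨hji, hj⟩

theorem measureReal_X_and_Y_false (hp : 0 ≤ p) (hu : u ≤ 1) (hq : 0 ≤ q) (l : Fin M)
    (i : Fin N) :
    (ℙ : Measure Ω).real {ω | G.X l i ω = true ∧ G.Y Sd l ω = false} =
      p * ((if i ∈ Sd then u else 1) * ((1 - q) * (1 - (1 - u) * p) ^ (Sd.erase i).card)) := by
  have := G.isProbabilityMeasure
  have hX : DeterminedBy G.bits {.inl (l, i)} (· ∈ {ω | G.X l i ω = true}) :=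
    (G.determinedBy_X (Finset.mem_singleton_self _)).comp (· = true)
  have hd : DeterminedBy G.bits {.inr (.inl (i, l))} (· ∈ {ω | i ∈ Sd → G.d i l ω = false}) :=
    (G.determinedBy_d (Finset.mem_singleton_self _)).comp (fun b => i ∈ Sd → b = false)
  have hw : DeterminedBy G.bits {.inr (.inr l)} (· ∈ {ω | G.w l ω = false}) :=
    (G.determinedBy_w (Finset.mem_singleton_self _)).comp (· = false)
  have hmask : ∀ j ∈ Sd.erase i,
      DeterminedBy G.bits (maskBlock l j) (· ∈ {ω | (G.d j l ω && G.X l j ω) = false}) :=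
    fun j _ => (G.determinedBy_d (by simp [maskBlock])).comp₂
      (G.determinedBy_X (by simp [maskBlock])) (fun a b => (a && b) = false)
  have hd_prob :
      (ℙ : Measure Ω).real {ω | i ∈ Sd → G.d i l ω = false} = if i ∈ Sd then u else 1 := by
    split_ifs with hi
    · simpa [hi] using G.measureReal_d_false hu i l
    · simp [hi]
  have hG := G.iIndepFun_bits
  rw [setOf_X_and_Y_false,
    hG.measureReal_inter_of_determinedBy G.measurable_bits ?_ hX
      (hd.inter (hw.inter (DeterminedBy.biInter hmask))),
    hG.measureReal_inter_of_determinedBy G.measurable_bits ?_ hd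
      (hw.inter (DeterminedBy.biInter hmask)),
    hG.measureReal_inter_of_determinedBy G.measurable_bits ?_ hw (DeterminedBy.biInter hmask),
    hG.measureReal_biInter_of_determinedBy G.measurable_bits ?_ hmask,
    Finset.prod_congr rfl fun j _ => G.measureReal_d_and_X_false hp hu l j, Finset.prod_const,
    G.measureReal_X_true hp, hd_prob, G.measureReal_w_false hq]
  · exact fun j _ j' _ h => by simp [maskBlock, Function.onFun, Ne.symm h]
  all_goals simp [maskBlock]

end GTModel

theorem stmt_5_general {Ω : Type} [MeasureSpace Ω]
    (M N K : ℕ)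
    (p u q : ℝ) (hp : 0 < p) (hp1 : p < 1) (hu0 : 0 ≤ u) (hu1 : u < 1)
    (hq0 : 0 ≤ q)
    (Sd : Finset (Fin N)) (hSd : Sd.card = K)
    (G : GTModel Ω M N p u q) (ψ : ℝ) :
    (∀ j : Fin N, j ∉ Sd →
      ProbabilityTheory.variance (G.T Sd ψ j) (ℙ : Measure Ω)
        ≤ M * p * ((1 - q) * (1 - (1 - u) * p) ^ K
            + ψ ^ 2 * (1 - (1 - q) * (1 - (1 - u) * p) ^ K)))
    ∧ (∀ i : Fin N, i ∈ Sd →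
      ProbabilityTheory.variance (G.T Sd ψ i) (ℙ : Measure Ω)
        ≤ M * p * ((u / (1 - (1 - u) * p)) * ((1 - q) * (1 - (1 - u) * p) ^ K)
            + ψ ^ 2 * (1 - (u / (1 - (1 - u) * p)) * ((1 - q) * (1 - (1 - u) * p) ^ K)))) := by
  have hc : 0 < 1 - (1 - u) * p := by nlinarith
  have hvar (i : Fin N) := G.variance_T_le Sd hp.le ψ i fun l =>
    G.measureReal_X_and_Y_false Sd hp.le hu1.le hq0 l i
  refine ⟨fun j hj => (hvar j).trans_eq ?_, fun i hi => (hvar i).trans_eq ?_⟩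
  · rw [if_neg hj, Finset.erase_eq_of_notMem hj, hSd]
    ring
  · have hγ : u / (1 - (1 - u) * p) * ((1 - q) * (1 - (1 - u) * p) ^ K)
        = u * ((1 - q) * (1 - (1 - u) * p) ^ (Sd.erase i).card) := by
      rw [← hSd, ← Finset.card_erase_add_one hi, pow_succ]
      field_simp
    rw [if_pos hi, hγ]
    ring

/-- With the column statistic `T(·)` built with constant `ψ ≥ 0`, for every
non-defective `j ∉ S_d`, `Var(T(j)) ≤ M·p·(Γ + ψ²(1−Γ))`, and for every defective
`i ∈ S_d`, `Var(T(i)) ≤ M·p·(γ0Γ + ψ²(1−γ0Γ))`. -/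
theorem stmt_5 {Ω : Type} [MeasureSpace Ω] [IsProbabilityMeasure (ℙ : Measure Ω)]
    (M N K : ℕ) (hN : 2 ≤ N) (hK1 : 1 ≤ K) (hKN : K < N) (hM : 1 ≤ M)
    (p u q : ℝ) (hp : 0 < p) (hp1 : p < 1) (hu0 : 0 ≤ u) (hu1 : u < 1)
    (hq0 : 0 ≤ q) (hq1 : q < 1)
    (Sd : Finset (Fin N)) (hSd : Sd.card = K)
    (G : GTModel Ω M N p u q) (ψ : ℝ) (hψ : 0 ≤ ψ) :
    (∀ j : Fin N, j ∉ Sd →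
      ProbabilityTheory.variance (G.T Sd ψ j) (ℙ : Measure Ω)
        ≤ M * p * ((1 - q) * (1 - (1 - u) * p) ^ K
            + ψ ^ 2 * (1 - (1 - q) * (1 - (1 - u) * p) ^ K)))
    ∧ (∀ i : Fin N, i ∈ Sd →
      ProbabilityTheory.variance (G.T Sd ψ i) (ℙ : Measure Ω)
        ≤ M * p * ((u / (1 - (1 - u) * p)) * ((1 - q) * (1 - (1 - u) * p) ^ K)
            + ψ ^ 2 * (1 - (u / (1 - (1 - u) * p)) * ((1 - q) * (1 - (1 - u) * p) ^ K)))) :=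
  stmt_5_general M N K p u q hp hp1 hu0 hu1 hq0 Sd hSd G ψ
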